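/- Let ψ : ℝ → ℝ be defined by ψ(x) = exp(−1/(1−x²)) if −1 ≤ x < −1/2 and ψ(x) = 0 otherwise, and for μ ∈ ℝ with 2/5 + μ ≠ 0 set u(x,μ) = ψ(x/(2/5+μ) − 1). Fix μ, η > −2/5 and w > 0, and set b = (η + 2/5)/2 − w·(μ + 2/5)/2. Then the transformed snapshot x ↦ u(w·x + b, η) is not continuous exactly at the point x = (μ + 2/5)/2, i.e., at the same point where x ↦ u(x, μ) is discontinuous. -/

import Mathlib

open Topology Filter


noncomputable def ψ (x : ℝ) : ℝ :=
  if -1 ≤ x ∧ x < -1/2 then Real.exp (-1/(1 - x^2)) else 0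

noncomputable def u (x μ : ℝ) : ℝ := ψ (x / (2/5 + μ) - 1)

lemma psi_discont : ¬ ContinuousAt ψ (-1/2) := by
  intro h
  have hψ0 : ψ (-1/2) = 0 := by simp [ψ]
  have h1 : Filter.Tendsto ψ (𝓝[<] ((-1:ℝ)/2)) (𝓝 0) := by
    rw [← hψ0]
    exact (h.continuousWithinAt).tendsto
  have heq : ∀ᶠ x in 𝓝[<] ((-1:ℝ)/2), ψ x = Real.exp (-1/(1 - x^2)) := by
    have hev : ∀ᶠ x in 𝓝 ((-1:ℝ)/2), x > -1 := by
      apply eventually_gt_nhds; norm_num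
    filter_upwards [self_mem_nhdsWithin, nhdsWithin_le_nhds hev] with x hx hx'
    simp only [Set.mem_Iio] at hx
    simp [ψ, le_of_lt hx', hx]
  have hden : ContinuousAt (fun x : ℝ => -1/(1 - x^2)) (-1/2) := by
    apply ContinuousAt.div
    · fun_prop
    · fun_prop
    · norm_num
  have h2 : Filter.Tendsto (fun x : ℝ => Real.exp (-1/(1 - x^2)))
      (𝓝[<] ((-1:ℝ)/2)) (𝓝 (Real.exp (-1/(1 - ((-1:ℝ)/2)^2)))) :=
    (Real.continuous_exp.continuousAt.comp hden).mono_left nhdsWithin_le_nhds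
  have h1' : Filter.Tendsto ψ (𝓝[<] ((-1:ℝ)/2))
      (𝓝 (Real.exp (-1/(1 - ((-1:ℝ)/2)^2)))) :=
    h2.congr' (heq.mono fun x hx => hx.symm)
  have := tendsto_nhds_unique h1 h1'
  exact absurd this.symm (Real.exp_ne_zero _)

lemma aff_discont (a b x : ℝ) (ha : a ≠ 0) (h : ¬ ContinuousAt ψ (a*x+b)) :
    ¬ ContinuousAt (fun y => ψ (a*y+b)) x := by
  intro hc
  apply h
  have hinv : Continuous (fun y : ℝ => (y - b)/a) := by continuity
  have hpt : (a*x+b-b)/a = x := by field_simp; ring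
  have hc' : ContinuousAt (fun y => ψ (a*y+b)) ((a*x+b-b)/a) := by rw [hpt]; exact hc
  have h2 := hc'.comp (x := a*x+b) (f := fun y : ℝ => (y-b)/a) hinv.continuousAt
  have h3 : ContinuousAt (fun y : ℝ => ψ (a*((y-b)/a)+b)) (a*x+b) := h2
  convert h3 using 2 with y
  field_simp
  simp

theorem exact_shift_aligns_transformed_snapshot :
    ∀ μ η w : ℝ, μ > -(2/5) → η > -(2/5) → w > 0 →
      ¬ ContinuousAt (fun x => u (w * x + ((η + 2/5)/2 - w * ((μ + 2/5)/2))) η)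
          ((μ + 2/5)/2) ∧
      ¬ ContinuousAt (fun x => u x μ) ((μ + 2/5)/2) := by
  intro μ η w hμ hη hw
  have hη' : (2/5 + η) ≠ 0 := by linarith
  have hμ' : (2/5 + μ) ≠ 0 := by linarith
  constructor
  · have key : ¬ ContinuousAt (fun x => ψ ((w/(2/5+η)) * x +
        (((η + 2/5)/2 - w * ((μ + 2/5)/2))/(2/5+η) - 1))) ((μ + 2/5)/2) := by
      apply aff_discont
      · positivity
      · have heq : (w/(2/5+η)) * ((μ + 2/5)/2) +
            (((η + 2/5)/2 - w * ((μ + 2/5)/2))/(2/5+η) - 1) = -1/2 := by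
          have h1 : (2 + η*5 : ℝ) ≠ 0 := by linarith
          have h2 : (20 + η*50 : ℝ) ≠ 0 := by linarith
          field_simp [h1, h2]
          ring_nf
          field_simp
          ring
        rw [heq]
        exact psi_discont
    intro hc
    apply key
    have hfun : ∀ x : ℝ, u (w * x + ((η + 2/5)/2 - w * ((μ + 2/5)/2))) η
        = ψ ((w/(2/5+η)) * x + (((η + 2/5)/2 - w * ((μ + 2/5)/2))/(2/5+η) - 1)) := by
      intro x
      simp only [u]
      congr 1
      rw [add_div]; ring
    exact hc.congr (Filter.Eventually.of_forall fun x => (hfun x))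
  · have key : ¬ ContinuousAt (fun x => ψ ((1/(2/5+μ)) * x + (-1))) ((μ + 2/5)/2) := by
      apply aff_discont
      · positivity
      · have heq : (1/(2/5+μ)) * ((μ + 2/5)/2) + (-1:ℝ) = -1/2 := by
          have h1 : (2 + μ*5 : ℝ) ≠ 0 := by linarith
          have h2 : (20 + μ*50 : ℝ) ≠ 0 := by linarith
          field_simp [h1, h2]
          ring_nf
          field_simp
          ring
        rw [heq]
        exact psi_discont
    intro hc
    apply key
    have hfun : ∀ x : ℝ, u x μ = ψ ((1/(2/5+μ)) * x + (-1)) := by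
      intro x
      simp only [u]
      congr 1
      ring
    exact hc.congr (Filter.Eventually.of_forall fun x => (hfun x))
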